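/- arXiv:2605.25230 — 5 statements merged into one kernel-verified Lean document; each statement's English description precedes it below -/
import Mathlib

section
/- Tube stability (Proposition 1). In the stochastic inner recursion setup, for every m = 1, ..., M the in-tube second moment of the deviation satisfies E[‖e_m‖² · 1_{τ_r > m}] ≤ σ²ν² · Σ_{j=0}^{m−1} ρ_r^{2j} ≤ σ²ν² / (1 − ρ_r²). -/
/-!
On the event that the path has stayed in the tube up to time `m`,
`e (m+1) = (F (ζ m) - F (z m)) + σ • ξ m`. The first summand has norm at most `ρ ‖e m‖` and is
measurable with respect to `σ(ξ 0, …, ξ (m-1))`, hence independent of the centred `ξ m`, so the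
cross term vanishes in expectation. This gives `a (m+1) ≤ ρ² a m + σ²ν²` for the in-tube second
moments `a m`, and unrolling the recursion yields the geometric sum.
-/

open MeasureTheory ProbabilityTheory

open scoped RealInnerProductSpace

namespace ProbabilityTheory

variable {Ω E : Type*} {mΩ : MeasurableSpace Ω} {μ : Measure Ω}
  [NormedAddCommGroup E] [InnerProductSpace ℝ E] [FiniteDimensional ℝ E]
  [MeasurableSpace E] [BorelSpace E] {X Y : Ω → E}

lemma IndepFun.integral_inner_eq_zero (hXY : X ⟂ᵢ[μ] Y) (hX : Integrable X μ)
    (hY : Integrable Y μ) (hY0 : ∫ ω, Y ω ∂μ = 0) : ∫ ω, ⟪X ω, Y ω⟫ ∂μ = 0 := by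
  let b := stdOrthonormalBasis ℝ E
  have hcoord : ∀ i, ∫ ω, ⟪X ω, b i⟫ * ⟪b i, Y ω⟫ ∂μ = 0 := fun i => by
    have hi : (fun ω => ⟪X ω, b i⟫) ⟂ᵢ[μ] (fun ω => ⟪b i, Y ω⟫) :=
      hXY.comp (measurable_id.inner measurable_const) (measurable_const.inner measurable_id)
    rw [hi.integral_fun_mul_eq_mul_integral (hX.inner_const _).aestronglyMeasurable
      (hY.const_inner _).aestronglyMeasurable, integral_inner hY, hY0, inner_zero_right,
      mul_zero]
  have hint : ∀ i, Integrable (fun ω => ⟪X ω, b i⟫ * ⟪b i, Y ω⟫) μ := fun i =>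
    ((hXY.comp (measurable_id.inner measurable_const)
      (measurable_const.inner measurable_id)).integrable_mul
      (hX.inner_const (b i)) (hY.const_inner (b i)))
  calc ∫ ω, ⟪X ω, Y ω⟫ ∂μ = ∫ ω, ∑ i, ⟪X ω, b i⟫ * ⟪b i, Y ω⟫ ∂μ := by
        simp_rw [b.sum_inner_mul_inner]
    _ = 0 := by
        rw [integral_finsetSum _ fun i _ => hint i]
        exact Finset.sum_eq_zero fun i _ => hcoord i

lemma IndepFun.integral_norm_add_sq [IsFiniteMeasure μ] (hXY : X ⟂ᵢ[μ] Y) (hX : MemLp X 2 μ)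
    (hY : MemLp Y 2 μ) (hY0 : ∫ ω, Y ω ∂μ = 0) :
    ∫ ω, ‖X ω + Y ω‖ ^ 2 ∂μ = ∫ ω, ‖X ω‖ ^ 2 ∂μ + ∫ ω, ‖Y ω‖ ^ 2 ∂μ := by
  have hX2 := (memLp_two_iff_integrable_sq_norm hX.1).1 hX
  have hY2 := (memLp_two_iff_integrable_sq_norm hY.1).1 hY
  have hXY2 : Integrable (fun ω => ‖X ω + Y ω‖ ^ 2) μ :=
    (memLp_two_iff_integrable_sq_norm (hX.add hY).1).1 (hX.add hY)
  have hinner : Integrable (fun ω => 2 * ⟪X ω, Y ω⟫) μ := by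
    refine ((hXY2.sub hX2).sub hY2).congr (ae_of_all _ fun ω => ?_)
    simp only [Pi.sub_apply, norm_add_sq_real]
    ring
  simp_rw [norm_add_sq_real]
  rw [integral_add (f := fun ω => ‖X ω‖ ^ 2 + 2 * ⟪X ω, Y ω⟫) (hX2.add hinner) hY2,
    integral_add hX2 hinner, integral_const_mul,
    hXY.integral_inner_eq_zero (hX.integrable one_le_two) (hY.integrable one_le_two) hY0]
  ring

end ProbabilityTheory

lemma MeasureTheory.setIntegral_norm_sq_le_of_norm_le_mul {Ω E : Type*} {mΩ : MeasurableSpace Ω}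
    {μ : Measure Ω} [IsFiniteMeasure μ] [NormedAddCommGroup E] {A : Set Ω} (hA : MeasurableSet A)
    {f g : Ω → E} {ρ r : ℝ} (hg : AEStronglyMeasurable g μ) (hgr : ∀ ω ∈ A, ‖g ω‖ ≤ r)
    (hfg : ∀ ω ∈ A, ‖f ω‖ ≤ ρ * ‖g ω‖) :
    ∫ ω in A, ‖f ω‖ ^ 2 ∂μ ≤ ρ ^ 2 * ∫ ω in A, ‖g ω‖ ^ 2 ∂μ := by
  rw [← integral_const_mul]
  refine integral_mono_of_nonneg (ae_of_all _ fun _ => by positivity) ?_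
    (ae_restrict_of_forall_mem hA fun ω hω => ?_)
  · refine .of_bound ((hg.norm.pow 2).const_mul _).restrict (ρ ^ 2 * r ^ 2)
      (ae_restrict_of_forall_mem hA fun ω hω => ?_)
    rw [Real.norm_of_nonneg (by positivity)]
    gcongr
    exact hgr ω hω
  · calc ‖f ω‖ ^ 2 ≤ (ρ * ‖g ω‖) ^ 2 := pow_le_pow_left₀ (norm_nonneg _) (hfg ω hω) 2
      _ = ρ ^ 2 * ‖g ω‖ ^ 2 := mul_pow _ _ _

lemma le_mul_geom_sum_of_le_mul_add {a : ℕ → ℝ} {q c : ℝ} {M : ℕ} (hq : 0 ≤ q) (h1 : a 1 ≤ c)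
    (hstep : ∀ m, 1 ≤ m → m < M → a (m + 1) ≤ q * a m + c) :
    ∀ m, 1 ≤ m → m ≤ M → a m ≤ c * ∑ j ∈ Finset.range m, q ^ j := by
  intro m hm
  induction m, hm using Nat.le_induction with
  | base => intro _; simpa using h1
  | succ m hm ih =>
    intro hmM
    calc a (m + 1) ≤ q * a m + c := hstep m hm hmM
      _ ≤ q * (c * ∑ j ∈ Finset.range m, q ^ j) + c := by gcongr; exact ih (Nat.le_of_succ_le hmM)
      _ = c * ∑ j ∈ Finset.range (m + 1), q ^ j := by rw [geom_sum_succ]; ring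

section NoisePast

variable {Ω E : Type*} {mΩ : MeasurableSpace Ω} [mE : MeasurableSpace E] (ξ : ℕ → Ω → E)

abbrev noisePast (m : ℕ) : MeasurableSpace Ω := ⨆ i < m, mE.comap (ξ i)

variable {ξ}

lemma noisePast_mono : Monotone (noisePast ξ) := fun _ _ hmn =>
  iSup₂_le fun i hi => le_iSup₂_of_le i (hi.trans_le hmn) le_rfl

lemma noisePast_le (hξ : ∀ i, Measurable (ξ i)) (m : ℕ) : noisePast ξ m ≤ mΩ :=
  iSup₂_le fun i _ => (hξ i).comap_le

lemma measurable_noisePast {i m : ℕ} (hi : i < m) : Measurable[noisePast ξ m] (ξ i) :=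
  Measurable.of_comap_le (le_iSup₂_of_le i hi le_rfl)

lemma indep_noisePast {μ : Measure Ω} {M m : ℕ} (hξ : ∀ i, Measurable (ξ i))
    (hindep : iIndepFun (fun i : Fin M => ξ i) μ) (hm : m < M) :
    Indep (noisePast ξ m) (mE.comap (ξ m)) μ := by
  have h := indep_iSup_of_disjoint (fun i : Fin M => (hξ i).comap_le) hindep.iIndep
    (S := {i : Fin M | i < m}) (T := {⟨m, hm⟩})
    (Set.disjoint_singleton_right.2 (lt_irrefl m))
  refine indep_of_indep_of_le_right (indep_of_indep_of_le_left h ?_) ?_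
  · exact iSup₂_le fun i hi => le_iSup₂_of_le (⟨i, hi.trans hm⟩ : Fin M) hi le_rfl
  · exact le_iSup₂_of_le (⟨m, hm⟩ : Fin M) rfl le_rfl

end NoisePast

section TubeEvent

variable {Ω E : Type*} [NormedAddCommGroup E] (ζ : ℕ → Ω → E) (z : ℕ → E) (r : ℝ)

def tubeEvent (m : ℕ) : Set Ω := {ω | ∀ k, 1 ≤ k → k ≤ m → ‖ζ k ω - z k‖ ≤ r}

variable {ζ z r}

lemma tubeEvent_succ_subset (m : ℕ) : tubeEvent ζ z r (m + 1) ⊆ tubeEvent ζ z r m :=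
  fun _ hω k hk1 hkm => hω k hk1 (hkm.trans m.le_succ)

lemma measurableSet_tubeEvent [MeasurableSpace E] [BorelSpace E]
    {mΩ : MeasurableSpace Ω} {m : ℕ}
    (hζ : ∀ k, 1 ≤ k → k ≤ m → Measurable (ζ k)) : MeasurableSet (tubeEvent ζ z r m) := by
  simp only [tubeEvent, Set.ofPred_forall]
  exact .iInter fun k => .iInter fun hk1 => .iInter fun hkm =>
    measurableSet_le ((hζ k hk1 hkm).sub_const _).norm measurable_const

end TubeEvent

section Trajectory

variable {Ω E : Type*} {mΩ : MeasurableSpace Ω} {μ : Measure Ω}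
  [NormedAddCommGroup E] [InnerProductSpace ℝ E]
  {ξ ζ : ℕ → Ω → E} {z : ℕ → E} {F : E → E} {σ ρ r : ℝ}

lemma measurable_noisePast_traj [MeasurableSpace E] [BorelSpace E] [SecondCountableTopology E]
    {M : ℕ} (hF : Measurable F)
    (hζ1 : ∀ ω, ζ 1 ω = z 1 + σ • ξ 0 ω)
    (hζ : ∀ m, 1 ≤ m → m < M → ∀ ω, ζ (m + 1) ω = F (ζ m ω) + σ • ξ m ω) :
    ∀ m, 1 ≤ m → m ≤ M → Measurable[noisePast ξ m] (ζ m) := by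
  intro m hm
  induction m, hm using Nat.le_induction with
  | base =>
    intro _
    rw [funext hζ1]
    exact measurable_const.add ((measurable_noisePast zero_lt_one).const_smul σ)
  | succ m hm ih =>
    intro hmM
    rw [funext (hζ m hm hmM)]
    exact (hF.comp ((ih (Nat.le_of_succ_le hmM)).mono (noisePast_mono m.le_succ) le_rfl)).add
      ((measurable_noisePast m.lt_succ_self).const_smul σ)

lemma setIntegral_tubeEvent_one_le (hζ1 : ∀ ω, ζ 1 ω = z 1 + σ • ξ 0 ω)
    (hξ0 : Integrable (fun ω => ‖ξ 0 ω‖ ^ 2) μ) :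
    ∫ ω in tubeEvent ζ z r 1, ‖ζ 1 ω - z 1‖ ^ 2 ∂μ ≤ σ ^ 2 * ∫ ω, ‖ξ 0 ω‖ ^ 2 ∂μ := by
  have he : ∀ ω, ‖ζ 1 ω - z 1‖ ^ 2 = σ ^ 2 * ‖ξ 0 ω‖ ^ 2 := fun ω => by
    rw [hζ1, add_sub_cancel_left, norm_smul, mul_pow, Real.norm_eq_abs, sq_abs]
  simp_rw [he]
  rw [← integral_const_mul]
  exact setIntegral_le_integral (hξ0.const_mul _) (ae_of_all _ fun ω => by positivity)

end Trajectory

section Step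

variable {Ω E : Type*} {mΩ : MeasurableSpace Ω} {μ : Measure Ω}
  [NormedAddCommGroup E] [InnerProductSpace ℝ E] [FiniteDimensional ℝ E]
  [MeasurableSpace E] [BorelSpace E]
  {ξ ζ : ℕ → Ω → E} {z : ℕ → E} {F : E → E} {σ ρ r : ℝ}

lemma setIntegral_tubeEvent_succ_le [IsProbabilityMeasure μ] {m : ℕ} {𝓖 : MeasurableSpace Ω}
    (h𝓖 : 𝓖 ≤ mΩ) (hind : Indep 𝓖 (MeasurableSpace.comap (ξ m) ‹_›) μ)
    (hξ2 : MemLp (ξ m) 2 μ) (hξ0 : ∫ ω, ξ m ω ∂μ = 0) (hF : Measurable F)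
    (hζm : Measurable[𝓖] (ζ m)) (hA : MeasurableSet[𝓖] (tubeEvent ζ z r m))
    (hA' : MeasurableSet[mΩ] (tubeEvent ζ z r (m + 1))) (hm : 1 ≤ m)
    (hz : z (m + 1) = F (z m)) (hζ : ∀ ω, ζ (m + 1) ω = F (ζ m ω) + σ • ξ m ω) (hρ : 0 ≤ ρ)
    (hLip : ∀ a ∈ Metric.closedBall (z m) r, ‖F a - F (z m)‖ ≤ ρ * ‖a - z m‖) :
    ∫ ω in tubeEvent ζ z r (m + 1), ‖ζ (m + 1) ω - z (m + 1)‖ ^ 2 ∂μ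
      ≤ ρ ^ 2 * ∫ ω in tubeEvent ζ z r m, ‖ζ m ω - z m‖ ^ 2 ∂μ
        + σ ^ 2 * ∫ ω, ‖ξ m ω‖ ^ 2 ∂μ := by
  set A := tubeEvent ζ z r m
  have hAm : MeasurableSet[mΩ] A := h𝓖 _ hA
  have he : ∀ ω ∈ A, ‖ζ m ω - z m‖ ≤ r := fun ω hω => hω m hm le_rfl
  have hLipA : ∀ ω ∈ A, ‖F (ζ m ω) - F (z m)‖ ≤ ρ * ‖ζ m ω - z m‖ := fun ω hω =>
    hLip _ (by rw [Metric.mem_closedBall, dist_eq_norm]; exact he ω hω)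
  -- the Lipschitz increment, cut off outside the tube so that it stays bounded
  set X := A.indicator fun ω => F (ζ m ω) - F (z m)
  have hXmeas : Measurable[𝓖] X := ((hF.comp hζm).sub_const _).indicator hA
  have hX2 : MemLp X 2 μ := by
    refine (memLp_indicator_iff_restrict hAm).2 (.of_bound
      ((hXmeas.mono h𝓖 le_rfl).aestronglyMeasurable.restrict.congr ?_) (ρ * r)
      (ae_restrict_of_forall_mem hAm fun ω hω =>
        (hLipA ω hω).trans (mul_le_mul_of_nonneg_left (he ω hω) hρ)))
    exact (ae_restrict_of_forall_mem hAm fun ω hω => Set.indicator_of_mem hω _)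
  have hXξ : X ⟂ᵢ[μ] (fun ω => σ • ξ m ω) :=
    ((IndepFun_iff_Indep _ _ _).2 (indep_of_indep_of_le_left hind hXmeas.comap_le)).comp
      measurable_id (measurable_const_smul σ)
  have hsplit : ∀ ω ∈ tubeEvent ζ z r (m + 1), ζ (m + 1) ω - z (m + 1) = X ω + σ • ξ m ω :=
    fun ω hω => by
      rw [hζ, hz, show X ω = _ from Set.indicator_of_mem (tubeEvent_succ_subset m hω) _]
      abel
  calc ∫ ω in tubeEvent ζ z r (m + 1), ‖ζ (m + 1) ω - z (m + 1)‖ ^ 2 ∂μ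
      = ∫ ω in tubeEvent ζ z r (m + 1), ‖X ω + σ • ξ m ω‖ ^ 2 ∂μ :=
        setIntegral_congr_fun hA' fun ω hω => by rw [hsplit ω hω]
    _ ≤ ∫ ω, ‖X ω + σ • ξ m ω‖ ^ 2 ∂μ :=
        setIntegral_le_integral ((hX2.add (hξ2.const_smul σ)).integrable_norm_pow two_ne_zero)
          (ae_of_all _ fun _ => by positivity)
    _ = ∫ ω, ‖X ω‖ ^ 2 ∂μ + ∫ ω, ‖σ • ξ m ω‖ ^ 2 ∂μ :=
        hXξ.integral_norm_add_sq hX2 (hξ2.const_smul σ) (by rw [integral_smul, hξ0, smul_zero])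
    _ = ∫ ω in A, ‖F (ζ m ω) - F (z m)‖ ^ 2 ∂μ + σ ^ 2 * ∫ ω, ‖ξ m ω‖ ^ 2 ∂μ := by
        congr 1
        · rw [← integral_indicator hAm]
          refine integral_congr_ae (ae_of_all _ fun ω => ?_)
          by_cases hω : ω ∈ A <;> simp [X, hω]
        · rw [← integral_const_mul]
          simp_rw [norm_smul, mul_pow, Real.norm_eq_abs, sq_abs]
    _ ≤ ρ ^ 2 * ∫ ω in A, ‖ζ m ω - z m‖ ^ 2 ∂μ + σ ^ 2 * ∫ ω, ‖ξ m ω‖ ^ 2 ∂μ := by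
        gcongr
        exact setIntegral_norm_sq_le_of_norm_le_mul hAm
          ((hζm.mono h𝓖 le_rfl).sub_const _).aestronglyMeasurable he hLipA

end Step

theorem tube_stability_general
    {Ω : Type*} [MeasureSpace Ω] [IsProbabilityMeasure (ℙ : Measure Ω)]
    {d : ℕ} {M : ℕ} (hM : 1 ≤ M)
    (ξ : ℕ → Ω → EuclideanSpace ℝ (Fin d))
    (hξmeas : ∀ m, Measurable (ξ m))
    (hξindep : iIndepFun (fun m : Fin M => ξ (m : ℕ)) ℙ)
    (hξsq : ∀ m, m < M → Integrable (fun ω => ‖ξ m ω‖ ^ 2) ℙ)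
    (hξmean : ∀ m, m < M → ∫ ω, ξ m ω = 0)
    {ν : ℝ}
    (hξmom : ∀ m, m < M → ∫ ω, ‖ξ m ω‖ ^ 2 ≤ ν ^ 2)
    {σ : ℝ}
    (F : EuclideanSpace ℝ (Fin d) → EuclideanSpace ℝ (Fin d))
    (hF : Measurable F)
    (z : ℕ → EuclideanSpace ℝ (Fin d))
    (hz : ∀ m, 1 ≤ m → m < M → z (m + 1) = F (z m))
    (ζ : ℕ → Ω → EuclideanSpace ℝ (Fin d))
    (hζ1 : ∀ ω, ζ 1 ω = z 1 + σ • ξ 0 ω)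
    (hζ : ∀ m, 1 ≤ m → m < M → ∀ ω, ζ (m + 1) ω = F (ζ m ω) + σ • ξ m ω)
    {r : ℝ} (hr : 0 < r)
    {ρ : ℝ} (hρ0 : 0 ≤ ρ) (hρ1 : ρ < 1)
    (hLip : ∀ a ∈ ⋃ m ∈ Set.Icc 1 M, Metric.closedBall (z m) r,
            ∀ b ∈ ⋃ m ∈ Set.Icc 1 M, Metric.closedBall (z m) r,
            ‖F a - F b‖ ≤ ρ * ‖a - b‖) :
    ∀ m, 1 ≤ m → m ≤ M →
      (∫ ω in {ω | ∀ k, 1 ≤ k → k ≤ m → ‖ζ k ω - z k‖ ≤ r}, ‖ζ m ω - z m‖ ^ 2)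
          ≤ σ ^ 2 * ν ^ 2 * ∑ j ∈ Finset.range m, ρ ^ (2 * j)
        ∧ σ ^ 2 * ν ^ 2 * ∑ j ∈ Finset.range m, ρ ^ (2 * j)
          ≤ σ ^ 2 * ν ^ 2 / (1 - ρ ^ 2) := by
  intro m hm1 hmM
  have hadapt := measurable_noisePast_traj hF hζ1 hζ
  have hevent : ∀ k ≤ M, MeasurableSet[noisePast ξ k] (tubeEvent ζ z r k) := fun k hk =>
    measurableSet_tubeEvent fun j hj1 hjk =>
      (hadapt j hj1 (hjk.trans hk)).mono (noisePast_mono hjk) le_rfl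
  have hLipTube : ∀ k, 1 ≤ k → k ≤ M → ∀ a ∈ Metric.closedBall (z k) r,
      ‖F a - F (z k)‖ ≤ ρ * ‖a - z k‖ := fun k hk1 hkM a ha =>
    hLip a (Set.mem_biUnion ⟨hk1, hkM⟩ ha) (z k)
      (Set.mem_biUnion ⟨hk1, hkM⟩ (Metric.mem_closedBall_self hr.le))
  have hstep : ∀ k, 1 ≤ k → k < M →
      ∫ ω in tubeEvent ζ z r (k + 1), ‖ζ (k + 1) ω - z (k + 1)‖ ^ 2
        ≤ ρ ^ 2 * (∫ ω in tubeEvent ζ z r k, ‖ζ k ω - z k‖ ^ 2) + σ ^ 2 * ν ^ 2 :=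
    fun k hk1 hkM => by
      have hξ2 : MemLp (ξ k) 2 ℙ :=
        (memLp_two_iff_integrable_sq_norm (hξmeas k).aestronglyMeasurable).2 (hξsq k hkM)
      exact (setIntegral_tubeEvent_succ_le (noisePast_le hξmeas k)
        (indep_noisePast hξmeas hξindep hkM) hξ2 (hξmean k hkM) hF (hadapt k hk1 hkM.le)
        (hevent k hkM.le) (noisePast_le hξmeas _ _ (hevent (k + 1) hkM)) hk1 (hz k hk1 hkM)
        (hζ k hk1 hkM) hρ0 (hLipTube k hk1 hkM.le)).trans
        (add_le_add_right (mul_le_mul_of_nonneg_left (hξmom k hkM) (sq_nonneg σ)) _)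
  have hrec := le_mul_geom_sum_of_le_mul_add
    (a := fun k => ∫ ω in tubeEvent ζ z r k, ‖ζ k ω - z k‖ ^ 2) (sq_nonneg ρ)
    ((setIntegral_tubeEvent_one_le hζ1 (hξsq 0 hM)).trans
      (mul_le_mul_of_nonneg_left (hξmom 0 hM) (sq_nonneg σ))) hstep m hm1 hmM
  have hgeom : ∑ j ∈ Finset.range m, (ρ ^ 2) ^ j ≤ 1 / (1 - ρ ^ 2) := by
    simpa using geom_sum_Ico_le_of_lt_one (m := 0) (n := m) (sq_nonneg ρ)
      (pow_lt_one₀ hρ0 hρ1 two_ne_zero)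
  simp only [pow_mul]
  exact ⟨hrec, (mul_le_mul_of_nonneg_left hgeom (by positivity)).trans_eq (mul_one_div _ _)⟩

/-- **Tube stability (Proposition 1).**
In the stochastic inner recursion setup — with independent mean-zero noise
`ξ 0, …, ξ (M-1)` of second moment at most `ν²`, deterministic trajectory
`z (m+1) = F (z m)`, stochastic trajectory `ζ 1 = z 1 + σ • ξ 0`,
`ζ (m+1) = F (ζ m) + σ • ξ m`, deviations `e m = ζ m - z m`, and `F`
`ρ`-Lipschitz (with `0 ≤ ρ < 1`) on the `r`-tube around the deterministic
path — for every `m = 1, …, M` the in-tube second moment of the deviation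
(the integral of `‖e m‖²` over the event `{τ_r > m} = {‖e 1‖ ≤ r, …, ‖e m‖ ≤ r}`)
satisfies
`E[‖e m‖² 1_{τ_r > m}] ≤ σ²ν² ∑_{j=0}^{m-1} ρ^{2j} ≤ σ²ν² / (1 - ρ²)`. -/
theorem tube_stability
    {Ω : Type*} [MeasureSpace Ω] [IsProbabilityMeasure (ℙ : Measure Ω)]
    {d : ℕ} {M : ℕ} (hM : 1 ≤ M)
    (ξ : ℕ → Ω → EuclideanSpace ℝ (Fin d))
    (hξmeas : ∀ m, Measurable (ξ m))
    (hξindep : iIndepFun (fun m : Fin M => ξ (m : ℕ)) ℙ)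
    (hξint : ∀ m, m < M → Integrable (ξ m) ℙ)
    (hξsq : ∀ m, m < M → Integrable (fun ω => ‖ξ m ω‖ ^ 2) ℙ)
    (hξmean : ∀ m, m < M → ∫ ω, ξ m ω = 0)
    {ν : ℝ} (hν : 0 ≤ ν)
    (hξmom : ∀ m, m < M → ∫ ω, ‖ξ m ω‖ ^ 2 ≤ ν ^ 2)
    {σ : ℝ} (hσ : 0 ≤ σ)
    (F : EuclideanSpace ℝ (Fin d) → EuclideanSpace ℝ (Fin d))
    (hF : Measurable F)
    (z : ℕ → EuclideanSpace ℝ (Fin d))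
    (hz : ∀ m, 1 ≤ m → m < M → z (m + 1) = F (z m))
    (ζ : ℕ → Ω → EuclideanSpace ℝ (Fin d))
    (hζ1 : ∀ ω, ζ 1 ω = z 1 + σ • ξ 0 ω)
    (hζ : ∀ m, 1 ≤ m → m < M → ∀ ω, ζ (m + 1) ω = F (ζ m ω) + σ • ξ m ω)
    {r : ℝ} (hr : 0 < r)
    {ρ : ℝ} (hρ0 : 0 ≤ ρ) (hρ1 : ρ < 1)
    (hLip : ∀ a ∈ ⋃ m ∈ Set.Icc 1 M, Metric.closedBall (z m) r,
            ∀ b ∈ ⋃ m ∈ Set.Icc 1 M, Metric.closedBall (z m) r,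
            ‖F a - F b‖ ≤ ρ * ‖a - b‖) :
    ∀ m, 1 ≤ m → m ≤ M →
      (∫ ω in {ω | ∀ k, 1 ≤ k → k ≤ m → ‖ζ k ω - z k‖ ≤ r}, ‖ζ m ω - z m‖ ^ 2)
          ≤ σ ^ 2 * ν ^ 2 * ∑ j ∈ Finset.range m, ρ ^ (2 * j)
        ∧ σ ^ 2 * ν ^ 2 * ∑ j ∈ Finset.range m, ρ ^ (2 * j)
          ≤ σ ^ 2 * ν ^ 2 / (1 - ρ ^ 2) :=
  tube_stability_general hM ξ hξmeas hξindep hξsq hξmean hξmom F hF z hz ζ hζ1 hζ hr hρ0 hρ1 hLip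
end

section
/- One-step in-tube recursion bound. In the stochastic inner recursion setup, for every m = 1, ..., M−1, E[‖e_{m+1}‖² · 1_{τ_r > m}] ≤ ρ_r² · E[‖e_m‖² · 1_{τ_r > m}] + σ²ν². -/
/-!
On the event `{τ_r > m}` both `ζ m` and `z m` lie in the `r`-tube, so
`e (m+1) = (F (ζ m) - F (z m)) + σ ξ m` with `‖F (ζ m) - F (z m)‖ ≤ ρ ‖e m‖`. Expanding the square,
the cross term `⟪1_{τ_r > m} (F (ζ m) - F (z m)), ξ m⟫` has zero mean: its first factor is a
function of `ξ 0, …, ξ (m-1)` alone, hence independent of the centred `ξ m`. The remaining noise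
term is at most `σ² E‖ξ m‖² ≤ σ²ν²`.
-/

open MeasureTheory ProbabilityTheory
open scoped RealInnerProductSpace

section Independence

variable {Ω : Type*} {mΩ : MeasurableSpace Ω} {μ : Measure Ω}

theorem ProbabilityTheory.Indep.indepFun_of_measurable {β γ : Type*} [MeasurableSpace β]
    [MeasurableSpace γ] {m₁ m₂ : MeasurableSpace Ω} (h : Indep m₁ m₂ μ) {f : Ω → β} {g : Ω → γ}
    (hf : Measurable[m₁] f) (hg : Measurable[m₂] g) : IndepFun f g μ :=
  (IndepFun_iff_Indep f g μ).2 <|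
    indep_of_indep_of_le_left (indep_of_indep_of_le_right h hg.comap_le) hf.comap_le

theorem ProbabilityTheory.iIndepFun.indep_iSup_lt {β : Type*} [mβ : MeasurableSpace β]
    {M m : ℕ} (hmM : m < M) {ξ : ℕ → Ω → β} (hξ : ∀ i, Measurable (ξ i))
    (h : iIndepFun (fun i : Fin M => ξ i) μ) :
    Indep (⨆ i < m, mβ.comap (ξ i)) (mβ.comap (ξ m)) μ := by
  have hdisj := indep_iSup_of_disjoint (m := fun i : Fin M => mβ.comap (ξ i))
    (fun i => (hξ i).comap_le) h.iIndep (S := {i | (i : ℕ) < m}) (T := {⟨m, hmM⟩})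
    (Set.disjoint_singleton_right.2 (lt_irrefl m))
  refine indep_of_indep_of_le_right (indep_of_indep_of_le_left hdisj ?_) ?_
  · refine iSup₂_le fun i hi => ?_
    exact le_iSup₂_of_le (f := fun (j : Fin M) (_ : j ∈ {j : Fin M | (j : ℕ) < m}) =>
      mβ.comap (ξ j)) ⟨i, hi.trans hmM⟩ hi le_rfl
  · rw [iSup_singleton]

theorem ProbabilityTheory.IndepFun.integral_inner_eq_zero_s7 {E : Type*} [NormedAddCommGroup E]
    [InnerProductSpace ℝ E] [CompleteSpace E] [MeasurableSpace E] [BorelSpace E]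
    {X Y : Ω → E} (hXY : IndepFun X Y μ) (hX : Integrable X μ) (hY : Integrable Y μ)
    (hY0 : ∫ ω, Y ω ∂μ = 0) :
    ∫ ω, ⟪X ω, Y ω⟫ ∂μ = 0 :=
  (hXY.integral_bilin hX hY (innerSL ℝ)).trans (by simp [hY0])

end Independence

section NoisyIterate

variable {Ω E : Type*} [NormedAddCommGroup E] [MeasurableSpace E] [BorelSpace E]

theorem measurableSet_forall_norm_sub_le {m₀ : MeasurableSpace Ω} {ζ : ℕ → Ω → E} {m : ℕ}
    (hζ : ∀ k, 1 ≤ k → k ≤ m → Measurable[m₀] (ζ k)) (z : ℕ → E) (r : ℝ) :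
    MeasurableSet[m₀] {ω | ∀ k, 1 ≤ k → k ≤ m → ‖ζ k ω - z k‖ ≤ r} := by
  simp only [Set.ofPred_forall]
  exact .iInter fun k => .iInter fun hk => .iInter fun hkm =>
    measurableSet_le ((hζ k hk hkm).sub_const _).norm measurable_const

theorem measurable_noisyIterate {m₀ : MeasurableSpace Ω} [NormedSpace ℝ E]
    [SecondCountableTopology E] {n : ℕ} {F : E → E} (hF : Measurable F) {z₁ : E} {σ : ℝ}
    {ξ ζ : ℕ → Ω → E} (hξ : ∀ i < n, Measurable[m₀] (ξ i))
    (hζ₁ : ∀ ω, ζ 1 ω = z₁ + σ • ξ 0 ω)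
    (hζ : ∀ k, 1 ≤ k → k < n → ∀ ω, ζ (k + 1) ω = F (ζ k ω) + σ • ξ k ω) :
    ∀ k, 1 ≤ k → k ≤ n → Measurable[m₀] (ζ k) := by
  intro k hk
  induction k, hk using Nat.le_induction with
  | base =>
    intro hn
    rw [funext hζ₁]
    exact ((hξ 0 hn).const_smul σ).const_add z₁
  | succ k hk ih =>
    intro hkn
    rw [funext (hζ k hk hkn)]
    exact (hF.comp (ih (Nat.le_of_succ_le hkn))).add ((hξ k hkn).const_smul σ)

theorem indepFun_indicator_tube_increment {mΩ : MeasurableSpace Ω} {μ : Measure Ω}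
    [NormedSpace ℝ E] [SecondCountableTopology E] {M m : ℕ} (hm1 : 1 ≤ m) (hmM : m < M)
    {ξ ζ : ℕ → Ω → E} (hξmeas : ∀ i, Measurable (ξ i))
    (hξindep : iIndepFun (fun i : Fin M => ξ i) μ)
    {F : E → E} (hF : Measurable F) {z : ℕ → E} {σ : ℝ} (hζ1 : ∀ ω, ζ 1 ω = z 1 + σ • ξ 0 ω)
    (hζ : ∀ k, 1 ≤ k → k < m → ∀ ω, ζ (k + 1) ω = F (ζ k ω) + σ • ξ k ω) (r : ℝ) :
    IndepFun ({ω | ∀ k, 1 ≤ k → k ≤ m → ‖ζ k ω - z k‖ ≤ r}.indicator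
      fun ω => F (ζ m ω) - F (z m)) (ξ m) μ := by
  have hpast := measurable_noisyIterate hF (m₀ := ⨆ i < m, MeasurableSpace.comap (ξ i) _)
    (fun i hi => (comap_measurable (ξ i)).mono (le_iSup₂_of_le i hi le_rfl) le_rfl) hζ1 hζ
  exact (hξindep.indep_iSup_lt hmM hξmeas).indepFun_of_measurable
    (((hF.comp (hpast m hm1 le_rfl)).sub_const _).indicator
      (measurableSet_forall_norm_sub_le hpast z r)) (comap_measurable _)

end NoisyIterate

section SquareIntegrals

variable {Ω E : Type*} {mΩ : MeasurableSpace Ω} {μ : Measure Ω} [NormedAddCommGroup E]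

theorem setIntegral_norm_sq_le_of_norm_le {F : Type*} [NormedAddCommGroup F] {A : Set Ω}
    (hA : MeasurableSet A) {f : Ω → E} {g : Ω → F}
    (hg : IntegrableOn (fun ω => ‖g ω‖ ^ 2) A μ) {c : ℝ} (h : ∀ ω ∈ A, ‖f ω‖ ≤ c * ‖g ω‖) :
    ∫ ω in A, ‖f ω‖ ^ 2 ∂μ ≤ c ^ 2 * ∫ ω in A, ‖g ω‖ ^ 2 ∂μ := by
  rw [← integral_const_mul]
  refine integral_mono_of_nonneg (ae_of_all _ fun _ => by positivity) (hg.const_mul _)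
    (ae_restrict_of_forall_mem hA fun ω hω => ?_)
  simpa only [mul_pow] using pow_le_pow_left₀ (norm_nonneg _) (h ω hω) 2

variable [InnerProductSpace ℝ E] [CompleteSpace E] [MeasurableSpace E] [BorelSpace E]

theorem setIntegral_norm_add_smul_sq [IsFiniteMeasure μ] {A : Set Ω} (hA : MeasurableSet A)
    {Y ξ : Ω → E} (hY : MemLp Y 2 (μ.restrict A)) (hξ : MemLp ξ 2 μ)
    (hind : IndepFun (A.indicator Y) ξ μ) (hξ0 : ∫ ω, ξ ω ∂μ = 0) (σ : ℝ) :
    ∫ ω in A, ‖Y ω + σ • ξ ω‖ ^ 2 ∂μ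
      = ∫ ω in A, ‖Y ω‖ ^ 2 ∂μ + σ ^ 2 * ∫ ω in A, ‖ξ ω‖ ^ 2 ∂μ := by
  have hYA : Integrable (A.indicator Y) μ :=
    (integrable_indicator_iff hA).2 (hY.integrable one_le_two)
  have hξi : Integrable ξ μ := hξ.integrable one_le_two
  have hinner : A.indicator (fun ω => ⟪Y ω, ξ ω⟫) = fun ω => ⟪A.indicator Y ω, ξ ω⟫ := by
    ext ω
    by_cases hω : ω ∈ A <;> simp [hω]
  have hcross : ∫ ω in A, ⟪Y ω, ξ ω⟫ ∂μ = 0 := by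
    rw [← integral_indicator hA, hinner, hind.integral_inner_eq_zero_s7 hYA hξi hξ0]
  have hcross_int : IntegrableOn (fun ω => ⟪Y ω, ξ ω⟫) A μ := by
    rw [← integrable_indicator_iff hA, hinner]
    exact hind.integrable_bilin hYA hξi (innerSL ℝ)
  have hY2 : IntegrableOn (fun ω => ‖Y ω‖ ^ 2) A μ := hY.integrable_norm_pow two_ne_zero
  have hξ2 : IntegrableOn (fun ω => ‖ξ ω‖ ^ 2) A μ :=
    (hξ.integrable_norm_pow two_ne_zero).integrableOn
  have hexpand (ω : Ω) :
      ‖Y ω + σ • ξ ω‖ ^ 2 = ‖Y ω‖ ^ 2 + 2 * σ * ⟪Y ω, ξ ω⟫ + σ ^ 2 * ‖ξ ω‖ ^ 2 := by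
    rw [norm_add_sq_real, real_inner_smul_right, norm_smul, mul_pow, Real.norm_eq_abs, sq_abs]
    ring
  simp_rw [hexpand]
  rw [integral_add ?_ (hξ2.const_mul _), integral_add hY2 (hcross_int.const_mul _),
    integral_const_mul, integral_const_mul, hcross, mul_zero, add_zero]
  exact hY2.add (hcross_int.const_mul _)

end SquareIntegrals

theorem one_step_in_tube_recursion_general
    {Ω : Type*} [MeasureSpace Ω] [IsProbabilityMeasure (ℙ : Measure Ω)]
    {d : ℕ} {M : ℕ}
    (ξ : ℕ → Ω → EuclideanSpace ℝ (Fin d))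
    (hξmeas : ∀ m, Measurable (ξ m))
    (hξindep : iIndepFun (fun m : Fin M => ξ (m : ℕ)) ℙ)
    (hξsq : ∀ m, m < M → Integrable (fun ω => ‖ξ m ω‖ ^ 2) ℙ)
    (hξmean : ∀ m, m < M → ∫ ω, ξ m ω = 0)
    {ν : ℝ}
    (hξmom : ∀ m, m < M → ∫ ω, ‖ξ m ω‖ ^ 2 ≤ ν ^ 2)
    {σ : ℝ}
    (F : EuclideanSpace ℝ (Fin d) → EuclideanSpace ℝ (Fin d))
    (hF : Measurable F)
    (z : ℕ → EuclideanSpace ℝ (Fin d))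
    (hz : ∀ m, 1 ≤ m → m < M → z (m + 1) = F (z m))
    (ζ : ℕ → Ω → EuclideanSpace ℝ (Fin d))
    (hζ1 : ∀ ω, ζ 1 ω = z 1 + σ • ξ 0 ω)
    (hζ : ∀ m, 1 ≤ m → m < M → ∀ ω, ζ (m + 1) ω = F (ζ m ω) + σ • ξ m ω)
    {r : ℝ} (hr : 0 < r)
    {ρ : ℝ} (hρ0 : 0 ≤ ρ)
    (hLip : ∀ a ∈ ⋃ m ∈ Set.Icc 1 M, Metric.closedBall (z m) r,
            ∀ b ∈ ⋃ m ∈ Set.Icc 1 M, Metric.closedBall (z m) r,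
            ‖F a - F b‖ ≤ ρ * ‖a - b‖) :
    ∀ m, 1 ≤ m → m < M →
      (∫ ω in {ω | ∀ k, 1 ≤ k → k ≤ m → ‖ζ k ω - z k‖ ≤ r}, ‖ζ (m + 1) ω - z (m + 1)‖ ^ 2)
        ≤ ρ ^ 2 * (∫ ω in {ω | ∀ k, 1 ≤ k → k ≤ m → ‖ζ k ω - z k‖ ≤ r}, ‖ζ m ω - z m‖ ^ 2)
            + σ ^ 2 * ν ^ 2 := by
  intro m hm1 hmM
  set A := {ω | ∀ k, 1 ≤ k → k ≤ m → ‖ζ k ω - z k‖ ≤ r}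
  set Y : Ω → EuclideanSpace ℝ (Fin d) := fun ω => F (ζ m ω) - F (z m)
  have hζ' : ∀ k, 1 ≤ k → k < m → ∀ ω, ζ (k + 1) ω = F (ζ k ω) + σ • ξ k ω :=
    fun k hk hkm => hζ k hk (hkm.trans hmM)
  have hmeas := measurable_noisyIterate hF (fun i _ => hξmeas i) hζ1 hζ'
  have hA : MeasurableSet A := measurableSet_forall_norm_sub_le hmeas z r
  have hem (ω) (hω : ω ∈ A) : ‖ζ m ω - z m‖ ≤ r := hω m hm1 le_rfl
  have hY_le (ω) (hω : ω ∈ A) : ‖Y ω‖ ≤ ρ * ‖ζ m ω - z m‖ := by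
    have hm : m ∈ Set.Icc 1 M := ⟨hm1, hmM.le⟩
    refine hLip _ (Set.mem_biUnion hm ?_) _ (Set.mem_biUnion hm (Metric.mem_closedBall_self hr.le))
    rw [Metric.mem_closedBall, dist_eq_norm]
    exact hem ω hω
  have hY : MemLp Y 2 ((ℙ : Measure Ω).restrict A) :=
    .of_bound ((hF.comp (hmeas m hm1 le_rfl)).sub_const _).aestronglyMeasurable (ρ * r)
      (ae_restrict_of_forall_mem hA fun ω hω => (hY_le ω hω).trans (by gcongr; exact hem ω hω))
  have he : MemLp (fun ω => ζ m ω - z m) 2 ((ℙ : Measure Ω).restrict A) :=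
    .of_bound ((hmeas m hm1 le_rfl).sub_const _).aestronglyMeasurable r
      (ae_restrict_of_forall_mem hA hem)
  have hξ : MemLp (ξ m) 2 ℙ :=
    (memLp_two_iff_integrable_sq_norm (hξmeas m).aestronglyMeasurable).2 (hξsq m hmM)
  have hstep (ω : Ω) : ζ (m + 1) ω - z (m + 1) = Y ω + σ • ξ m ω := by
    rw [hζ m hm1 hmM ω, hz m hm1 hmM, add_sub_right_comm]
  simp_rw [hstep]
  rw [setIntegral_norm_add_smul_sq hA hY hξ
    (indepFun_indicator_tube_increment hm1 hmM hξmeas hξindep hF hζ1 hζ' r) (hξmean m hmM) σ]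
  gcongr ?_ + σ ^ 2 * ?_
  · exact setIntegral_norm_sq_le_of_norm_le hA (he.integrable_norm_pow two_ne_zero) hY_le
  · exact (setIntegral_le_integral (hξsq m hmM) (ae_of_all _ fun _ => sq_nonneg _)).trans
      (hξmom m hmM)

/-- **One-step in-tube recursion bound.**
In the stochastic inner recursion setup, for every `m = 1, …, M-1`,
`E[‖e (m+1)‖² 1_{τ_r > m}] ≤ ρ² E[‖e m‖² 1_{τ_r > m}] + σ²ν²`,
where `{τ_r > m} = {‖e 1‖ ≤ r, …, ‖e m‖ ≤ r}`. -/
theorem one_step_in_tube_recursion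
    {Ω : Type*} [MeasureSpace Ω] [IsProbabilityMeasure (ℙ : Measure Ω)]
    {d : ℕ} {M : ℕ} (hM : 1 ≤ M)
    (ξ : ℕ → Ω → EuclideanSpace ℝ (Fin d))
    (hξmeas : ∀ m, Measurable (ξ m))
    (hξindep : iIndepFun (fun m : Fin M => ξ (m : ℕ)) ℙ)
    (hξint : ∀ m, m < M → Integrable (ξ m) ℙ)
    (hξsq : ∀ m, m < M → Integrable (fun ω => ‖ξ m ω‖ ^ 2) ℙ)
    (hξmean : ∀ m, m < M → ∫ ω, ξ m ω = 0)
    {ν : ℝ} (hν : 0 ≤ ν)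
    (hξmom : ∀ m, m < M → ∫ ω, ‖ξ m ω‖ ^ 2 ≤ ν ^ 2)
    {σ : ℝ} (hσ : 0 ≤ σ)
    (F : EuclideanSpace ℝ (Fin d) → EuclideanSpace ℝ (Fin d))
    (hF : Measurable F)
    (z : ℕ → EuclideanSpace ℝ (Fin d))
    (hz : ∀ m, 1 ≤ m → m < M → z (m + 1) = F (z m))
    (ζ : ℕ → Ω → EuclideanSpace ℝ (Fin d))
    (hζ1 : ∀ ω, ζ 1 ω = z 1 + σ • ξ 0 ω)
    (hζ : ∀ m, 1 ≤ m → m < M → ∀ ω, ζ (m + 1) ω = F (ζ m ω) + σ • ξ m ω)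
    {r : ℝ} (hr : 0 < r)
    {ρ : ℝ} (hρ0 : 0 ≤ ρ) (hρ1 : ρ < 1)
    (hLip : ∀ a ∈ ⋃ m ∈ Set.Icc 1 M, Metric.closedBall (z m) r,
            ∀ b ∈ ⋃ m ∈ Set.Icc 1 M, Metric.closedBall (z m) r,
            ‖F a - F b‖ ≤ ρ * ‖a - b‖) :
    ∀ m, 1 ≤ m → m < M →
      (∫ ω in {ω | ∀ k, 1 ≤ k → k ≤ m → ‖ζ k ω - z k‖ ≤ r}, ‖ζ (m + 1) ω - z (m + 1)‖ ^ 2)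
        ≤ ρ ^ 2 * (∫ ω in {ω | ∀ k, 1 ≤ k → k ≤ m → ‖ζ k ω - z k‖ ≤ r}, ‖ζ m ω - z m‖ ^ 2)
            + σ ^ 2 * ν ^ 2 :=
  one_step_in_tube_recursion_general ξ hξmeas hξindep hξsq hξmean hξmom F hF z hz ζ hζ1 hζ hr hρ0
    hLip
end

section
/- Pre-exit second-moment bound. In the stochastic inner recursion setup, define b_m := E[‖e_m‖² · 1_{τ_r > m−1}] for m = 1, ..., M (with 1_{τ_r > 0} := 1). Then for every m = 1, ..., M, b_m ≤ σ²ν² · Σ_{j=0}^{m−1} ρ_r^{2j} ≤ σ²ν² / (1 − ρ_r²). -/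
open MeasureTheory ProbabilityTheory
open scoped InnerProductSpace

/-!
Write `e m = ζ m - z m`. On the event `{τ_r > m}` the point `ζ m` lies in the tube, so
`e (m + 1) = (F (ζ m) - F (z m)) + σ ξ m` with `‖F (ζ m) - F (z m)‖ ≤ ρ ‖e m‖`. That event and the
first summand are functions of `ξ 0, …, ξ (m - 1)`, hence independent of the centred noise `ξ m`, so
the cross term in the expansion of `‖e (m + 1)‖²` has mean zero. This gives
`b (m + 1) ≤ ρ² b m + σ²ν²` and `b 1 ≤ σ²ν²`, and unrolling the recursion yields the geometric sum.
-/

namespace ProbabilityTheory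

theorem iIndepFun.indepFun_of_measurable_iSup_lt {Ω ι β γ : Type*} [Preorder ι]
    {mΩ : MeasurableSpace Ω} {μ : Measure Ω} [mβ : MeasurableSpace β] [MeasurableSpace γ]
    {X : ι → Ω → β} (hX : ∀ i, Measurable (X i)) (h : iIndepFun X μ) (i : ι) {W : Ω → γ}
    (hW : Measurable[⨆ j, ⨆ (_ : j < i), mβ.comap (X j)] W) :
    IndepFun W (X i) μ := by
  have hpast := indep_iSup_of_disjoint (fun j => (hX j).comap_le)
    ((iIndepFun_iff_iIndep _ X μ).1 h) (S := Set.Iio i) (T := {i})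
    (Set.disjoint_singleton_right.2 (lt_irrefl i))
  rw [IndepFun_iff_Indep]
  exact indep_of_indep_of_le_right (indep_of_indep_of_le_left hpast hW.comap_le)
    (le_iSup₂ (f := fun j (_ : j ∈ ({i} : Set ι)) => mβ.comap (X j)) i rfl)

theorem IndepFun.integral_inner_eq_zero_s8 {Ω E : Type*} [NormedAddCommGroup E]
    [InnerProductSpace ℝ E] [CompleteSpace E] [MeasurableSpace E] [BorelSpace E]
    {mΩ : MeasurableSpace Ω} {μ : Measure Ω} {W Y : Ω → E} (h : IndepFun W Y μ)
    (hW : Integrable W μ) (hY : Integrable Y μ) (hY0 : ∫ ω, Y ω ∂μ = 0) :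
    ∫ ω, ⟪W ω, Y ω⟫_ℝ ∂μ = 0 := by
  calc ∫ ω, ⟪W ω, Y ω⟫_ℝ ∂μ = innerSL ℝ (∫ ω, W ω ∂μ) (∫ ω, Y ω ∂μ) :=
        h.integral_bilin hW hY (innerSL ℝ)
    _ = 0 := by rw [hY0, map_zero]

end ProbabilityTheory

section PreExitEvent

variable {Ω E : Type*} [NormedAddCommGroup E]

/-- The event `{τ_r > m - 1}`. -/
def preExitEvent (ζ : ℕ → Ω → E) (z : ℕ → E) (r : ℝ) (m : ℕ) : Set Ω :=
  {ω | ∀ k, 1 ≤ k → k < m → ‖ζ k ω - z k‖ ≤ r}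

theorem preExitEvent_one (ζ : ℕ → Ω → E) (z : ℕ → E) (r : ℝ) :
    preExitEvent ζ z r 1 = Set.univ :=
  Set.eq_univ_of_forall fun _ k hk1 hk => absurd hk1 (by omega)

theorem preExitEvent_antitone (ζ : ℕ → Ω → E) (z : ℕ → E) (r : ℝ) :
    Antitone (preExitEvent ζ z r) :=
  fun _ _ hmn _ h k hk1 hk => h k hk1 (hk.trans_le hmn)

theorem measurableSet_preExitEvent [MeasurableSpace E] [BorelSpace E] {m : MeasurableSpace Ω}
    {ζ : ℕ → Ω → E} (z : ℕ → E) (r : ℝ) {n : ℕ} (hζ : ∀ k, 1 ≤ k → k < n → Measurable[m] (ζ k)) :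
    MeasurableSet[m] (preExitEvent ζ z r n) := by
  simp only [preExitEvent, Set.ofPred_forall]
  exact .iInter fun k => .iInter fun hk1 => .iInter fun hk =>
    measurableSet_le ((hζ k hk1 hk).sub_const _).norm measurable_const

end PreExitEvent

section Trajectory

variable {Ω E : Type*} [NormedAddCommGroup E] [NormedSpace ℝ E] [MeasurableSpace E]
  [BorelSpace E] [SecondCountableTopology E]

theorem measurable_trajectory {m : MeasurableSpace Ω} {F : E → E} (hF : Measurable F)
    {σ : ℝ} {z₁ : E} {ξ ζ : ℕ → Ω → E} {n : ℕ} (hζ1 : ∀ ω, ζ 1 ω = z₁ + σ • ξ 0 ω)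
    (hζ : ∀ k, 1 ≤ k → k < n → ∀ ω, ζ (k + 1) ω = F (ζ k ω) + σ • ξ k ω)
    (hξ : ∀ j < n, Measurable[m] (ξ j)) :
    ∀ k, 1 ≤ k → k ≤ n → Measurable[m] (ζ k) := by
  intro k hk
  induction k, hk using Nat.le_induction with
  | base =>
    intro hn
    rw [funext hζ1]
    exact measurable_const.add ((hξ 0 hn).const_smul σ)
  | succ k hk ih =>
    intro hkn
    rw [funext (hζ k hk hkn)]
    exact (hF.comp (ih (Nat.le_of_succ_le hkn))).add ((hξ k hkn).const_smul σ)

theorem indepFun_indicator_preExitEvent {mΩ : MeasurableSpace Ω} {μ : Measure Ω} {M n : ℕ}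
    (hn1 : 1 ≤ n) (hnM : n < M) {ξ ζ : ℕ → Ω → E} (hξ : ∀ m, Measurable (ξ m))
    (hind : iIndepFun (fun m : Fin M => ξ m) μ) {F : E → E} (hF : Measurable F) {σ : ℝ}
    {z : ℕ → E} (hζ1 : ∀ ω, ζ 1 ω = z 1 + σ • ξ 0 ω)
    (hζ : ∀ k, 1 ≤ k → k < n → ∀ ω, ζ (k + 1) ω = F (ζ k ω) + σ • ξ k ω) (r : ℝ) :
    IndepFun ((preExitEvent ζ z r (n + 1)).indicator fun ω => F (ζ n ω) - F (z n)) (ξ n) μ := by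
  let past : MeasurableSpace Ω :=
    ⨆ j : Fin M, ⨆ (_ : j < ⟨n, hnM⟩), MeasurableSpace.comap (ξ j) inferInstance
  have hξ_past : ∀ j < n, Measurable[past] (ξ j) := fun j hj =>
    measurable_iff_comap_le.2 (le_iSup₂_of_le (⟨j, hj.trans hnM⟩ : Fin M) hj le_rfl)
  have hζ_past := measurable_trajectory hF hζ1 hζ hξ_past
  refine hind.indepFun_of_measurable_iSup_lt (X := fun m : Fin M => ξ m) (fun j => hξ j)
    (⟨n, hnM⟩ : Fin M) ?_
  exact ((hF.comp (hζ_past n hn1 le_rfl)).sub_const _).indicator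
    (measurableSet_preExitEvent z r fun k hk1 hk => hζ_past k hk1 (Nat.le_of_lt_succ hk))

end Trajectory

section SecondMomentStep

variable {Ω E : Type*} [NormedAddCommGroup E] [InnerProductSpace ℝ E] [CompleteSpace E]
  [MeasurableSpace E] [BorelSpace E]

theorem integrable_and_integral_indicator_sq_norm_le
    {mΩ : MeasurableSpace Ω} {μ : Measure Ω} [IsFiniteMeasure μ]
    {A A' : Set Ω} (hA' : MeasurableSet A') (hA'A : A' ⊆ A) {e e' u Y : Ω → E} {σ ρ : ℝ}
    (hu : AEStronglyMeasurable u μ) (he' : ∀ ω ∈ A', e' ω = u ω + σ • Y ω)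
    (hue : ∀ ω ∈ A', ‖u ω‖ ≤ ρ * ‖e ω‖) (hindep : IndepFun (A'.indicator u) Y μ)
    (he : Integrable (A.indicator fun ω => ‖e ω‖ ^ 2) μ) (hY : Integrable Y μ)
    (hY2 : Integrable (fun ω => ‖Y ω‖ ^ 2) μ) (hY0 : ∫ ω, Y ω ∂μ = 0) :
    Integrable (A'.indicator fun ω => ‖e' ω‖ ^ 2) μ ∧
      ∫ ω, A'.indicator (fun ω => ‖e' ω‖ ^ 2) ω ∂μ
        ≤ ρ ^ 2 * ∫ ω, A.indicator (fun ω => ‖e ω‖ ^ 2) ω ∂μ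
          + σ ^ 2 * ∫ ω, ‖Y ω‖ ^ 2 ∂μ := by
  set W := A'.indicator u with hW_def
  have hW2_le : ∀ ω, ‖W ω‖ ^ 2 ≤ ρ ^ 2 * A.indicator (fun ω => ‖e ω‖ ^ 2) ω := by
    intro ω
    by_cases hω : ω ∈ A'
    · rw [hW_def, Set.indicator_of_mem hω, Set.indicator_of_mem (hA'A hω), ← mul_pow]
      exact pow_le_pow_left₀ (norm_nonneg _) (hue ω hω) 2
    · rw [hW_def, Set.indicator_of_notMem hω, norm_zero, sq, zero_mul]
      exact mul_nonneg (sq_nonneg ρ) (Set.indicator_nonneg (fun _ _ => sq_nonneg _) ω)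
  have hWm : AEStronglyMeasurable W μ := hu.indicator hA'
  have hW2 : Integrable (fun ω => ‖W ω‖ ^ 2) μ :=
    (he.const_mul (ρ ^ 2)).mono' (hWm.norm.pow 2)
      (ae_of_all _ fun ω => by rw [Real.norm_of_nonneg (sq_nonneg _)]; exact hW2_le ω)
  have hW : Integrable W μ :=
    ((memLp_two_iff_integrable_sq_norm hWm).2 hW2).integrable one_le_two
  have hWY : Integrable (fun ω => ⟪W ω, Y ω⟫_ℝ) μ := hindep.integrable_bilin hW hY (innerSL ℝ)
  have hYA' : Integrable (A'.indicator fun ω => ‖Y ω‖ ^ 2) μ := hY2.indicator hA'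
  have hexpand : ∀ ω, A'.indicator (fun ω => ‖e' ω‖ ^ 2) ω =
      (‖W ω‖ ^ 2 + 2 * σ * ⟪W ω, Y ω⟫_ℝ) + σ ^ 2 * A'.indicator (fun ω => ‖Y ω‖ ^ 2) ω := by
    intro ω
    by_cases hω : ω ∈ A'
    · simp only [W, Set.indicator_of_mem hω, he' ω hω, norm_add_sq_real, inner_smul_right,
        norm_smul, mul_pow, Real.norm_eq_abs, sq_abs]
      ring
    · simp [W, hω]
  have hint₁ : Integrable (fun ω => ‖W ω‖ ^ 2 + 2 * σ * ⟪W ω, Y ω⟫_ℝ) μ :=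
    hW2.add (hWY.const_mul _)
  have hint₂ := hYA'.const_mul (σ ^ 2)
  refine ⟨(hint₁.add hint₂).congr (ae_of_all _ fun ω => (hexpand ω).symm), ?_⟩
  simp_rw [hexpand]
  rw [integral_add hint₁ hint₂, integral_add hW2 (hWY.const_mul _), integral_const_mul,
    integral_const_mul, hindep.integral_inner_eq_zero_s8 hW hY hY0, mul_zero, add_zero]
  gcongr ?_ + σ ^ 2 * ?_
  · rw [← integral_const_mul]
    exact integral_mono hW2 (he.const_mul _) hW2_le
  · exact integral_mono hYA' hY2 (Set.indicator_le_self' fun _ _ => sq_nonneg _)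

variable [SecondCountableTopology E]

theorem pre_exit_second_moment_le_geom_sum {mΩ : MeasurableSpace Ω} {μ : Measure Ω}
    [IsFiniteMeasure μ] {M : ℕ} {ξ : ℕ → Ω → E} (hξmeas : ∀ m, Measurable (ξ m))
    (hξindep : iIndepFun (fun m : Fin M => ξ m) μ)
    (hξint : ∀ m, m < M → Integrable (ξ m) μ)
    (hξsq : ∀ m, m < M → Integrable (fun ω => ‖ξ m ω‖ ^ 2) μ)
    (hξmean : ∀ m, m < M → ∫ ω, ξ m ω ∂μ = 0) {ν : ℝ}
    (hξmom : ∀ m, m < M → ∫ ω, ‖ξ m ω‖ ^ 2 ∂μ ≤ ν ^ 2) {σ : ℝ} {F : E → E} (hF : Measurable F)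
    {z : ℕ → E} (hz : ∀ m, 1 ≤ m → m < M → z (m + 1) = F (z m)) {ζ : ℕ → Ω → E}
    (hζ1 : ∀ ω, ζ 1 ω = z 1 + σ • ξ 0 ω)
    (hζ : ∀ m, 1 ≤ m → m < M → ∀ ω, ζ (m + 1) ω = F (ζ m ω) + σ • ξ m ω) {r ρ : ℝ}
    (hcontr : ∀ m, 1 ≤ m → m < M → ∀ x, ‖x - z m‖ ≤ r → ‖F x - F (z m)‖ ≤ ρ * ‖x - z m‖) :
    ∀ m, 1 ≤ m → m ≤ M →
      Integrable ((preExitEvent ζ z r m).indicator fun ω => ‖ζ m ω - z m‖ ^ 2) μ ∧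
        ∫ ω, (preExitEvent ζ z r m).indicator (fun ω => ‖ζ m ω - z m‖ ^ 2) ω ∂μ
          ≤ σ ^ 2 * ν ^ 2 * ∑ j ∈ Finset.range m, ρ ^ (2 * j) := by
  have hζmeas := measurable_trajectory hF hζ1 hζ fun j _ => hξmeas j
  intro m hm
  induction m, hm using Nat.le_induction with
  | base =>
    intro hM
    have he₁ : ∀ ω, ‖ζ 1 ω - z 1‖ ^ 2 = σ ^ 2 * ‖ξ 0 ω‖ ^ 2 := fun ω => by
      rw [hζ1, add_sub_cancel_left, norm_smul, mul_pow, Real.norm_eq_abs, sq_abs]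
    simp only [preExitEvent_one, Set.indicator_univ, he₁, integral_const_mul,
      Finset.sum_range_one, mul_zero, pow_zero, mul_one]
    exact ⟨(hξsq 0 hM).const_mul _, by gcongr; exact hξmom 0 hM⟩
  | succ n hn ih =>
    intro hnM
    obtain ⟨ih_int, ih_le⟩ := ih (Nat.le_of_succ_le hnM)
    obtain ⟨hint, hle⟩ := integrable_and_integral_indicator_sq_norm_le
      (e := fun ω => ζ n ω - z n) (e' := fun ω => ζ (n + 1) ω - z (n + 1))
      (u := fun ω => F (ζ n ω) - F (z n)) (σ := σ)
      (measurableSet_preExitEvent z r fun k hk1 hk => hζmeas k hk1 (by omega))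
      (preExitEvent_antitone ζ z r n.le_succ)
      ((hF.comp (hζmeas n hn (by omega))).sub_const (F (z n))).aestronglyMeasurable
      (fun ω _ => by rw [hζ n hn hnM ω, hz n hn hnM]; abel)
      (fun ω hω => hcontr n hn hnM _ (hω n hn n.lt_succ_self))
      (indepFun_indicator_preExitEvent hn hnM hξmeas hξindep hF hζ1
        (fun k hk1 hk => hζ k hk1 (hk.trans hnM)) r)
      ih_int (hξint n hnM) (hξsq n hnM) (hξmean n hnM)
    refine ⟨hint, hle.trans ?_⟩
    have hgeom : ∑ j ∈ Finset.range (n + 1), ρ ^ (2 * j)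
        = ρ ^ 2 * ∑ j ∈ Finset.range n, ρ ^ (2 * j) + 1 := by
      simp only [pow_mul]
      exact geom_sum_succ
    rw [hgeom]
    have := mul_le_mul_of_nonneg_left ih_le (sq_nonneg ρ)
    have := mul_le_mul_of_nonneg_left (hξmom n hnM) (sq_nonneg σ)
    linarith

end SecondMomentStep

theorem pre_exit_second_moment_bound_general
    {Ω : Type*} [MeasureSpace Ω] [IsProbabilityMeasure (ℙ : Measure Ω)]
    {d : ℕ} {M : ℕ}
    (ξ : ℕ → Ω → EuclideanSpace ℝ (Fin d))
    (hξmeas : ∀ m, Measurable (ξ m))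
    (hξindep : iIndepFun (fun m : Fin M => ξ (m : ℕ)) ℙ)
    (hξint : ∀ m, m < M → Integrable (ξ m) ℙ)
    (hξsq : ∀ m, m < M → Integrable (fun ω => ‖ξ m ω‖ ^ 2) ℙ)
    (hξmean : ∀ m, m < M → ∫ ω, ξ m ω = 0)
    {ν : ℝ}
    (hξmom : ∀ m, m < M → ∫ ω, ‖ξ m ω‖ ^ 2 ≤ ν ^ 2)
    {σ : ℝ}
    (F : EuclideanSpace ℝ (Fin d) → EuclideanSpace ℝ (Fin d))
    (hF : Measurable F)
    (z : ℕ → EuclideanSpace ℝ (Fin d))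
    (hz : ∀ m, 1 ≤ m → m < M → z (m + 1) = F (z m))
    (ζ : ℕ → Ω → EuclideanSpace ℝ (Fin d))
    (hζ1 : ∀ ω, ζ 1 ω = z 1 + σ • ξ 0 ω)
    (hζ : ∀ m, 1 ≤ m → m < M → ∀ ω, ζ (m + 1) ω = F (ζ m ω) + σ • ξ m ω)
    {r : ℝ}
    {ρ : ℝ} (hρ0 : 0 ≤ ρ) (hρ1 : ρ < 1)
    (hLip : ∀ a ∈ ⋃ m ∈ Set.Icc 1 M, Metric.closedBall (z m) r,
            ∀ b ∈ ⋃ m ∈ Set.Icc 1 M, Metric.closedBall (z m) r,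
            ‖F a - F b‖ ≤ ρ * ‖a - b‖) :
    ∀ m, 1 ≤ m → m ≤ M →
      (∫ ω in {ω | ∀ k, 1 ≤ k → k < m → ‖ζ k ω - z k‖ ≤ r}, ‖ζ m ω - z m‖ ^ 2)
          ≤ σ ^ 2 * ν ^ 2 * ∑ j ∈ Finset.range m, ρ ^ (2 * j)
        ∧ σ ^ 2 * ν ^ 2 * ∑ j ∈ Finset.range m, ρ ^ (2 * j)
          ≤ σ ^ 2 * ν ^ 2 / (1 - ρ ^ 2) := by
  intro m hm hmM
  have hcontr : ∀ k, 1 ≤ k → k < M → ∀ x, ‖x - z k‖ ≤ r → ‖F x - F (z k)‖ ≤ ρ * ‖x - z k‖ := by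
    intro k hk1 hkM x hx
    have hball : ∀ y, ‖y - z k‖ ≤ r → y ∈ ⋃ m ∈ Set.Icc 1 M, Metric.closedBall (z m) r :=
      fun y hy => Set.mem_biUnion ⟨hk1, hkM.le⟩ (mem_closedBall_iff_norm.2 hy)
    exact hLip x (hball x hx) (z k) (hball (z k) (by simpa using (norm_nonneg _).trans hx))
  have hmeas : MeasurableSet (preExitEvent ζ z r m) :=
    measurableSet_preExitEvent z r fun k hk1 hk =>
      measurable_trajectory hF hζ1 hζ (fun j _ => hξmeas j) k hk1 (by omega)
  obtain ⟨-, hle⟩ := pre_exit_second_moment_le_geom_sum hξmeas hξindep hξint hξsq hξmean hξmom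
    hF hz hζ1 hζ hcontr m hm hmM
  refine ⟨(integral_indicator hmeas).symm.trans_le hle, ?_⟩
  have hgeom : ∑ j ∈ Finset.range m, ρ ^ (2 * j) ≤ 1 / (1 - ρ ^ 2) := by
    simpa [pow_mul] using
      geom_sum_Ico_le_of_lt_one (m := 0) (n := m) (sq_nonneg ρ) (by nlinarith)
  calc _ ≤ σ ^ 2 * ν ^ 2 * (1 / (1 - ρ ^ 2)) := by gcongr
    _ = _ := mul_one_div _ _

/-- **Pre-exit second-moment bound.**
In the stochastic inner recursion setup, define
`b m := E[‖e m‖² 1_{τ_r > m-1}]` for `m = 1, …, M` (with `1_{τ_r > 0} := 1`,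
so the event `{τ_r > m-1}` is `{ω | ∀ k, 1 ≤ k → k < m → ‖e k‖ ≤ r}`, which is
all of `Ω` when `m = 1`).  Then for every `m = 1, …, M`,
`b m ≤ σ²ν² ∑_{j=0}^{m-1} ρ^{2j} ≤ σ²ν² / (1 - ρ²)`. -/
theorem pre_exit_second_moment_bound
    {Ω : Type*} [MeasureSpace Ω] [IsProbabilityMeasure (ℙ : Measure Ω)]
    {d : ℕ} {M : ℕ} (hM : 1 ≤ M)
    (ξ : ℕ → Ω → EuclideanSpace ℝ (Fin d))
    (hξmeas : ∀ m, Measurable (ξ m))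
    (hξindep : iIndepFun (fun m : Fin M => ξ (m : ℕ)) ℙ)
    (hξint : ∀ m, m < M → Integrable (ξ m) ℙ)
    (hξsq : ∀ m, m < M → Integrable (fun ω => ‖ξ m ω‖ ^ 2) ℙ)
    (hξmean : ∀ m, m < M → ∫ ω, ξ m ω = 0)
    {ν : ℝ} (hν : 0 ≤ ν)
    (hξmom : ∀ m, m < M → ∫ ω, ‖ξ m ω‖ ^ 2 ≤ ν ^ 2)
    {σ : ℝ} (hσ : 0 ≤ σ)
    (F : EuclideanSpace ℝ (Fin d) → EuclideanSpace ℝ (Fin d))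
    (hF : Measurable F)
    (z : ℕ → EuclideanSpace ℝ (Fin d))
    (hz : ∀ m, 1 ≤ m → m < M → z (m + 1) = F (z m))
    (ζ : ℕ → Ω → EuclideanSpace ℝ (Fin d))
    (hζ1 : ∀ ω, ζ 1 ω = z 1 + σ • ξ 0 ω)
    (hζ : ∀ m, 1 ≤ m → m < M → ∀ ω, ζ (m + 1) ω = F (ζ m ω) + σ • ξ m ω)
    {r : ℝ} (hr : 0 < r)
    {ρ : ℝ} (hρ0 : 0 ≤ ρ) (hρ1 : ρ < 1)
    (hLip : ∀ a ∈ ⋃ m ∈ Set.Icc 1 M, Metric.closedBall (z m) r,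
            ∀ b ∈ ⋃ m ∈ Set.Icc 1 M, Metric.closedBall (z m) r,
            ‖F a - F b‖ ≤ ρ * ‖a - b‖) :
    ∀ m, 1 ≤ m → m ≤ M →
      (∫ ω in {ω | ∀ k, 1 ≤ k → k < m → ‖ζ k ω - z k‖ ≤ r}, ‖ζ m ω - z m‖ ^ 2)
          ≤ σ ^ 2 * ν ^ 2 * ∑ j ∈ Finset.range m, ρ ^ (2 * j)
        ∧ σ ^ 2 * ν ^ 2 * ∑ j ∈ Finset.range m, ρ ^ (2 * j)
          ≤ σ ^ 2 * ν ^ 2 / (1 - ρ ^ 2) :=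
  pre_exit_second_moment_bound_general ξ hξmeas hξindep hξint hξsq hξmean hξmom F hF z hz ζ hζ1 hζ
    hρ0 hρ1 hLip
end

section
/- Success-mass derivative under tilting. In the exponential tilt setup, let A ∈ 𝒜 and set p(t) := μ_t(A). If 0 < μ_t(A) < 1 for every t ∈ ℝ, then p is differentiable on ℝ and p′(t) = p(t)·(1 − p(t))·Δ(t), where Δ(t) := E_{μ_t}[q | A] − E_{μ_t}[q | A^c] with E_{μ_t}[q | A] := μ_t(A)^{-1} ∫_A q dμ_t and E_{μ_t}[q | A^c] := μ_t(A^c)^{-1} ∫_{A^c} q dμ_t. -/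
/-!
Write `p t = F t / Z t` with `F t = ∫_A e^{t q} dπ` and `Z t = ∫ e^{t q} dπ`, the moment generating
functions of `q` under `π.restrict A` and `π`. Since `q` is bounded both are finite for every `t`
and may be differentiated under the integral sign, and the quotient rule gives
`p' = E_t[q; A] - p E_t[q]`, the covariance of `1_A` and `q` under `μ_t`. Splitting `E_t[q]`
over `A` and `Aᶜ`, where `μ_t(Aᶜ) = 1 - p`, turns this into `p (1 - p) Δ`.
-/

open MeasureTheory ProbabilityTheory

namespace ProbabilityTheory

open Real

variable {Ω : Type*} {mΩ : MeasurableSpace Ω} {ν : Measure Ω} {X : Ω → ℝ} {t : ℝ} {s : Set Ω}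

lemma integrableExpSet_eq_univ_of_abs_le [IsFiniteMeasure ν] (hX : AEMeasurable X ν) {C : ℝ}
    (hXC : ∀ᵐ ω ∂ν, |X ω| ≤ C) : integrableExpSet X ν = Set.univ :=
  Set.eq_univ_of_forall fun _ =>
    integrable_exp_mul_of_mem_Icc hX (hXC.mono fun _ h => abs_le.1 h)

lemma integrableExpSet_subset_restrict :
    integrableExpSet X ν ⊆ integrableExpSet X (ν.restrict s) :=
  fun _ h => h.restrict

lemma measureReal_tilted_mul (hs : MeasurableSet s) :
    (ν.tilted (t * X ·)).real s = mgf X (ν.restrict s) t / mgf X ν t := by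
  rw [measureReal_def, tilted_mul_apply_eq_ofReal_integral_mgf' hs, integral_div, ← mgf,
    ENNReal.toReal_ofReal (div_nonneg mgf_nonneg mgf_nonneg)]

lemma setIntegral_tilted_mul_self (hs : MeasurableSet s) :
    ∫ ω in s, X ω ∂(ν.tilted (t * X ·))
      = (ν.restrict s)[fun ω => X ω * exp (t * X ω)] / mgf X ν t := by
  rw [setIntegral_tilted_mul_eq_mgf' _ hs, ← integral_div]
  congr 1 with ω
  rw [smul_eq_mul]
  ring

lemma hasDerivAt_measureReal_tilted_mul [NeZero ν] (ht : t ∈ interior (integrableExpSet X ν))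
    (hs : MeasurableSet s) :
    HasDerivAt (fun u => (ν.tilted (u * X ·)).real s)
      (∫ ω in s, X ω ∂(ν.tilted (t * X ·))
        - (ν.tilted (t * X ·)).real s * ∫ ω, X ω ∂(ν.tilted (t * X ·))) t := by
  have hZ : mgf X ν t ≠ 0 :=
    (mgf_pos' (NeZero.ne ν) (interior_subset ht : t ∈ integrableExpSet X ν)).ne'
  have hF := hasDerivAt_mgf (interior_mono (integrableExpSet_subset_restrict (s := s)) ht)
  have hmean :
      ∫ ω, X ω ∂(ν.tilted (t * X ·)) = ν[fun ω => X ω * exp (t * X ω)] / mgf X ν t := by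
    simpa using setIntegral_tilted_mul_self (ν := ν) (X := X) (t := t) MeasurableSet.univ
  simp only [measureReal_tilted_mul hs]
  rw [setIntegral_tilted_mul_self hs, hmean]
  refine (hF.div (hasDerivAt_mgf ht) hZ).congr_deriv ?_
  rw [sub_div, sq, mul_div_mul_right _ _ hZ, mul_div_mul_comm]

end ProbabilityTheory

/-- **Success-mass derivative under tilting.**
In the exponential tilt setup (`π` a probability measure, `q` bounded
measurable, `μ t` the tilt of `π` by `e^{t q} / Z t`), let `A` be a measurable
set and set `p t = μ t A`.  If `0 < μ t A < 1` for every `t`, then `p` is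
differentiable on `ℝ` with `p' t = p t (1 - p t) Δ t`, where
`Δ t = E_{μ t}[q | A] - E_{μ t}[q | Aᶜ]`
`     = (μ t A)⁻¹ ∫_A q dμ t - (μ t Aᶜ)⁻¹ ∫_{Aᶜ} q dμ t`. -/
theorem success_mass_derivative
    {H : Type*} [MeasurableSpace H] (π : Measure H) [IsProbabilityMeasure π]
    (q : H → ℝ) (hq : Measurable q) {C : ℝ} (hqC : ∀ h, |q h| ≤ C)
    (μ : ℝ → Measure H)
    (hμ : ∀ t, μ t = π.withDensity fun h =>
      ENNReal.ofReal (Real.exp (t * q h) / ∫ h', Real.exp (t * q h') ∂π))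
    (A : Set H) (hA : MeasurableSet A)
    (hp : ∀ t : ℝ, 0 < ((μ t) A).toReal ∧ ((μ t) A).toReal < 1) :
    ∀ t : ℝ,
      HasDerivAt (fun s => ((μ s) A).toReal)
        (((μ t) A).toReal * (1 - ((μ t) A).toReal)
          * ((((μ t) A).toReal)⁻¹ * (∫ h in A, q h ∂(μ t))
              - (((μ t) Aᶜ).toReal)⁻¹ * ∫ h in Aᶜ, q h ∂(μ t))) t := by
  intro t
  -- `hμ t` is `Measure.tilted` unfolded
  obtain rfl : μ = fun t => π.tilted (t * q ·) := funext hμ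
  obtain ⟨hp0, hp1⟩ := hp t
  simp only [← measureReal_def] at hp0 hp1 ⊢
  have hexp : integrableExpSet q π = Set.univ :=
    integrableExpSet_eq_univ_of_abs_le hq.aemeasurable (ae_of_all _ hqC)
  have : IsProbabilityMeasure (π.tilted (t * q ·)) :=
    isProbabilityMeasure_tilted (hexp ▸ Set.mem_univ t : t ∈ integrableExpSet q π)
  have hint : Integrable q (π.tilted (t * q ·)) :=
    Integrable.of_bound hq.aestronglyMeasurable C (ae_of_all _ hqC)
  rw [probReal_compl_eq_one_sub hA]
  refine (hasDerivAt_measureReal_tilted_mul (by simp [hexp]) hA).congr_deriv ?_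
  rw [← integral_add_compl hA hint]
  field_simp [hp0.ne', (sub_pos.2 hp1).ne']
  ring
end

section
/- Log-odds derivative equals the class-conditional gap. In the exponential tilt setup, let A ∈ 𝒜 and set p(t) := μ_t(A). If 0 < μ_t(A) < 1 for every t ∈ ℝ, then the log-odds t ↦ log(p(t)/(1 − p(t))) is differentiable on ℝ with derivative (d/dt) log(p(t)/(1 − p(t))) = Δ(t), where Δ(t) := E_{μ_t}[q | A] − E_{μ_t}[q | A^c] with E_{μ_t}[q | A] := μ_t(A)^{-1} ∫_A q dμ_t and E_{μ_t}[q | A^c] := μ_t(A^c)^{-1} ∫_{A^c} q dμ_t. -/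
/-!
With `F_B(t) = ∫_B e^{t q} dπ` one has `μ_t(B) = F_B(t) / Z(t)`, so `log μ_t(B)` is the
difference of the cumulant generating functions of `q` under `π|_B` and under `π`.
Differentiating them gives `d/dt log μ_t(B) = E_{μ_t}[q | B] - E_{μ_t}[q]`. The log-odds is
`log μ_t(A) - log μ_t(Aᶜ)`, in which the unconditional means cancel.
-/

open MeasureTheory

namespace ProbabilityTheory

open Real Set

variable {Ω : Type*} {mΩ : MeasurableSpace Ω} {μ : Measure Ω} {X : Ω → ℝ} {t : ℝ}

lemma integrable_exp_mul_of_abs_le_const [IsFiniteMeasure μ] (hX : AEMeasurable X μ) {C : ℝ}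
    (hXC : ∀ ω, |X ω| ≤ C) (t : ℝ) : Integrable (fun ω ↦ exp (t * X ω)) μ :=
  integrable_exp_mul_of_mem_Icc hX (.of_forall fun ω ↦ abs_le.1 (hXC ω))

lemma mem_interior_integrableExpSet_of_abs_le_const [IsFiniteMeasure μ] (hX : AEMeasurable X μ)
    {C : ℝ} (hXC : ∀ ω, |X ω| ≤ C) (t : ℝ) : t ∈ interior (integrableExpSet X μ) := by
  rw [show integrableExpSet X μ = univ from
    eq_univ_of_forall (integrable_exp_mul_of_abs_le_const hX hXC), interior_univ]
  trivial

lemma hasDerivAt_cgf (h : t ∈ interior (integrableExpSet X μ)) :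
    HasDerivAt (cgf X μ) (μ[fun ω ↦ X ω * exp (t * X ω)] / mgf X μ t) t := by
  rw [← deriv_cgf h]
  exact (analyticAt_cgf h).differentiableAt.hasDerivAt

lemma toReal_tilted_mul_apply [SFinite μ] (s : Set Ω) :
    (μ.tilted (t * X ·) s).toReal = mgf X (μ.restrict s) t / mgf X μ t := by
  rw [tilted_mul_apply_eq_ofReal_integral_mgf, integral_div]
  exact ENNReal.toReal_ofReal (div_nonneg mgf_nonneg mgf_nonneg)

lemma setIntegral_tilted_mul_self_eq_div_mgf [SFinite μ] (s : Set Ω) :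
    ∫ ω in s, X ω ∂(μ.tilted (t * X ·))
      = (μ.restrict s)[fun ω ↦ X ω * exp (t * X ω)] / mgf X μ t := by
  rw [setIntegral_tilted_mul_eq_mgf, ← integral_div]
  congr with ω
  rw [smul_eq_mul]
  ring

lemma integral_tilted_mul_self_eq_div_mgf [SFinite μ] :
    ∫ ω, X ω ∂(μ.tilted (t * X ·)) = μ[fun ω ↦ X ω * exp (t * X ω)] / mgf X μ t := by
  simpa using setIntegral_tilted_mul_self_eq_div_mgf (μ := μ) (X := X) (t := t) univ

lemma hasDerivAt_log_tilted_mul_apply [IsFiniteMeasure μ] (hX : AEMeasurable X μ) {C : ℝ}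
    (hXC : ∀ ω, |X ω| ≤ C) {B : Set Ω} (hB : μ B ≠ 0) (t : ℝ) :
    HasDerivAt (fun s ↦ log (μ.tilted (s * X ·) B).toReal)
      ((μ.tilted (t * X ·) B).toReal⁻¹ * ∫ ω in B, X ω ∂(μ.tilted (t * X ·))
        - ∫ ω, X ω ∂(μ.tilted (t * X ·))) t := by
  have hμB : μ.restrict B ≠ 0 := by simpa using hB
  have hμ : μ ≠ 0 := fun h ↦ hμB (by simp [h])
  have hmgf (s : ℝ) : 0 < mgf X μ s :=
    mgf_pos' hμ (integrable_exp_mul_of_abs_le_const hX hXC s)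
  have hmgfB (s : ℝ) : 0 < mgf X (μ.restrict B) s :=
    mgf_pos' hμB (integrable_exp_mul_of_abs_le_const hX.restrict hXC s)
  have hlog : (fun s ↦ log (μ.tilted (s * X ·) B).toReal)
      = fun s ↦ cgf X (μ.restrict B) s - cgf X μ s := by
    funext s
    rw [toReal_tilted_mul_apply, log_div (hmgfB s).ne' (hmgf s).ne', cgf, cgf]
  rw [hlog]
  refine ((hasDerivAt_cgf (mem_interior_integrableExpSet_of_abs_le_const hX.restrict hXC t)).sub
    (hasDerivAt_cgf (mem_interior_integrableExpSet_of_abs_le_const hX hXC t))).congr_deriv ?_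
  rw [toReal_tilted_mul_apply, setIntegral_tilted_mul_self_eq_div_mgf,
    integral_tilted_mul_self_eq_div_mgf, inv_div, div_mul_div_comm, mul_comm (mgf X μ t),
    mul_div_mul_right _ _ (hmgf t).ne']

end ProbabilityTheory

open ProbabilityTheory

/-- **Log-odds derivative equals the class-conditional gap.**
In the exponential tilt setup (`π` a probability measure, `q` bounded
measurable, `μ t` the tilt of `π` by `e^{t q} / Z t`), let `A` be a measurable
set and set `p t = μ t A`.  If `0 < μ t A < 1` for every `t`, then the
log-odds `t ↦ log (p t / (1 - p t))` is differentiable on `ℝ` with derivative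
`Δ t = E_{μ t}[q | A] - E_{μ t}[q | Aᶜ]`
`    = (μ t A)⁻¹ ∫_A q dμ t - (μ t Aᶜ)⁻¹ ∫_{Aᶜ} q dμ t`. -/
theorem log_odds_derivative
    {H : Type*} [MeasurableSpace H] (π : Measure H) [IsProbabilityMeasure π]
    (q : H → ℝ) (hq : Measurable q) {C : ℝ} (hqC : ∀ h, |q h| ≤ C)
    (μ : ℝ → Measure H)
    (hμ : ∀ t, μ t = π.withDensity fun h =>
      ENNReal.ofReal (Real.exp (t * q h) / ∫ h', Real.exp (t * q h') ∂π))
    (A : Set H) (hA : MeasurableSet A)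
    (hp : ∀ t : ℝ, 0 < ((μ t) A).toReal ∧ ((μ t) A).toReal < 1) :
    ∀ t : ℝ,
      HasDerivAt (fun s => Real.log (((μ s) A).toReal / (1 - ((μ s) A).toReal)))
        ((((μ t) A).toReal)⁻¹ * (∫ h in A, q h ∂(μ t))
          - (((μ t) Aᶜ).toReal)⁻¹ * ∫ h in Aᶜ, q h ∂(μ t)) t := by
  obtain rfl : μ = fun s ↦ π.tilted (s * q ·) := funext hμ
  intro t
  have hcompl (s : ℝ) : (π.tilted (s * q ·) Aᶜ).toReal = 1 - (π.tilted (s * q ·) A).toReal :=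
    have := isProbabilityMeasure_tilted
      (integrable_exp_mul_of_abs_le_const (μ := π) hq.aemeasurable hqC s)
    probReal_compl_eq_one_sub hA
  have hπ_ne_zero {B : Set H} (hB : 0 < (π.tilted (t * q ·) B).toReal) : π B ≠ 0 := fun h ↦ by
    simp [tilted_absolutelyContinuous π _ h] at hB
  have hlog_odds :
      (fun s ↦ Real.log ((π.tilted (s * q ·) A).toReal / (1 - (π.tilted (s * q ·) A).toReal)))
        = fun s ↦
          Real.log (π.tilted (s * q ·) A).toReal - Real.log (π.tilted (s * q ·) Aᶜ).toReal := by
    funext s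
    rw [hcompl, Real.log_div (hp s).1.ne' (sub_pos.2 (hp s).2).ne']
  rw [hlog_odds]
  refine ((hasDerivAt_log_tilted_mul_apply hq.aemeasurable hqC (hπ_ne_zero (hp t).1) t).sub
    (hasDerivAt_log_tilted_mul_apply hq.aemeasurable hqC
      (hπ_ne_zero ((hcompl t).symm ▸ sub_pos.2 (hp t).2)) t)).congr_deriv ?_
  ring
end
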